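/- arXiv:1805.10851 — 2 statements merged into one kernel-verified Lean document; each statement's English description precedes it below -/
import Mathlib

section
/- Let α > 0 and let w: I → ℝ be a C² solution of the ODE w''(y) = (1 + w'(y)²)^{(3-α)/2} on an open interval I. Fix θ ∈ (-π/2, π/2) and a ∈ ℝ, and define w_θ(x,y) = (cos θ)^{-(α+1)} · w((cos θ)^α · y) + (tan θ)·x + a on the set of (x,y) with (cos θ)^α · y ∈ I. Then w_θ satisfies the two-dimensional α-translating soliton equation div(Dw_θ/√(1+|Dw_θ|²)) = (1+|Dw_θ|²)^{-α/2}. -/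
/-!
In the direction `x` the function `w_θ` is affine with slope `tan θ`, so its graph is a tilted
cylinder over the graph of `g(y) = (cos θ)^{-(α+1)} w((cos θ)^α y)`. For such a cylinder the
operator `div (Du / √(1 + |Du|²))` reduces to `(1 + tan² θ) g'' / (1 + tan² θ + g'²)^{3/2}`.
Since `1 + tan² θ = cos⁻² θ` and `g' = w' / cos θ`, we have `1 + |Du|² = (1 + w'²) / cos² θ`, and
the powers of `cos θ` produced by the two scalings are exactly those the exponent `-α/2` asks for.
-/

open Real Set Filter Topology

/-- `div (Du / √(1 + |Du|²))`, written with the partial derivatives of `u`. -/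
noncomputable def meanCurvatureOp (u : ℝ × ℝ → ℝ) (p : ℝ × ℝ) : ℝ :=
  fderiv ℝ (fun q => fderiv ℝ u q (1, 0) /
      √(1 + (fderiv ℝ u q (1, 0)) ^ 2 + (fderiv ℝ u q (0, 1)) ^ 2)) p (1, 0) +
    fderiv ℝ (fun q => fderiv ℝ u q (0, 1) /
      √(1 + (fderiv ℝ u q (1, 0)) ^ 2 + (fderiv ℝ u q (0, 1)) ^ 2)) p (0, 1)

theorem fderiv_comp_snd_apply {φ : ℝ → ℝ} {p : ℝ × ℝ} (h : DifferentiableAt ℝ φ p.2)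
    (v : ℝ × ℝ) : fderiv ℝ (fun q : ℝ × ℝ => φ q.2) p v = deriv φ p.2 * v.2 := by
  change fderiv ℝ (φ ∘ Prod.snd) p v = _
  rw [(h.hasDerivAt.comp_hasFDerivAt p hasFDerivAt_snd).fderiv]
  simp [mul_comm]

theorem HasDerivAt.div_sqrt_add_sq {f : ℝ → ℝ} {f' k y : ℝ} (hk : 0 < k)
    (hf : HasDerivAt f f' y) :
    HasDerivAt (fun y => f y / √(k + f y ^ 2)) (k * f' / √(k + f y ^ 2) ^ 3) y := by
  have hS : 0 < k + f y ^ 2 := by positivity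
  have hsqrt := ((hf.fun_pow 2).const_add k).sqrt hS.ne'
  refine (hf.fun_div hsqrt (sqrt_pos.2 hS).ne').congr_deriv ?_
  have hsq : √(k + f y ^ 2) ^ 2 = k + f y ^ 2 := sq_sqrt hS.le
  have hpos : 0 < √(k + f y ^ 2) := sqrt_pos.2 hS
  generalize √(k + f y ^ 2) = R at hsq hpos ⊢
  field_simp
  linear_combination 2 * f' * hsq

section TiltedCylinder

variable {g : ℝ → ℝ} {t a : ℝ}

theorem hasFDerivAt_tiltedCylinder {g' : ℝ} {q : ℝ × ℝ} (hg : HasDerivAt g g' q.2) :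
    HasFDerivAt (fun q : ℝ × ℝ => g q.2 + t * q.1 + a)
      (g' • ContinuousLinearMap.snd ℝ ℝ ℝ + t • ContinuousLinearMap.fst ℝ ℝ ℝ) q :=
  ((hg.comp_hasFDerivAt q hasFDerivAt_snd).add (hasFDerivAt_fst.const_mul t)).add_const a

theorem fderiv_tiltedCylinder_apply_fst {g' : ℝ} {q : ℝ × ℝ} (hg : HasDerivAt g g' q.2) :
    fderiv ℝ (fun q : ℝ × ℝ => g q.2 + t * q.1 + a) q (1, 0) = t := by
  simp [(hasFDerivAt_tiltedCylinder hg).fderiv]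

theorem fderiv_tiltedCylinder_apply_snd {g' : ℝ} {q : ℝ × ℝ} (hg : HasDerivAt g g' q.2) :
    fderiv ℝ (fun q : ℝ × ℝ => g q.2 + t * q.1 + a) q (0, 1) = g' := by
  simp [(hasFDerivAt_tiltedCylinder hg).fderiv]

theorem meanCurvatureOp_tiltedCylinder {g' : ℝ → ℝ} {g'' : ℝ} {p : ℝ × ℝ}
    (hg : ∀ᶠ y in 𝓝 p.2, HasDerivAt g (g' y) y) (hg' : HasDerivAt g' g'' p.2) :
    meanCurvatureOp (fun q => g q.2 + t * q.1 + a) p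
      = (1 + t ^ 2) * g'' / √(1 + t ^ 2 + g' p.2 ^ 2) ^ 3 := by
  set u : ℝ × ℝ → ℝ := fun q => g q.2 + t * q.1 + a
  have hk : 0 < 1 + t ^ 2 := by positivity
  have hgrad : ∀ᶠ q in 𝓝 p, fderiv ℝ u q (1, 0) = t ∧ fderiv ℝ u q (0, 1) = g' q.2 := by
    filter_upwards [(continuous_snd.tendsto p).eventually hg] with q hq
    exact ⟨fderiv_tiltedCylinder_apply_fst hq, fderiv_tiltedCylinder_apply_snd hq⟩
  have hfst : (fun q => fderiv ℝ u q (1, 0) /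
        √(1 + fderiv ℝ u q (1, 0) ^ 2 + fderiv ℝ u q (0, 1) ^ 2))
      =ᶠ[𝓝 p] fun q => t / √(1 + t ^ 2 + g' q.2 ^ 2) := by
    filter_upwards [hgrad] with q ⟨hx, hy⟩
    rw [hx, hy]
  have hsnd : (fun q => fderiv ℝ u q (0, 1) /
        √(1 + fderiv ℝ u q (1, 0) ^ 2 + fderiv ℝ u q (0, 1) ^ 2))
      =ᶠ[𝓝 p] fun q => g' q.2 / √(1 + t ^ 2 + g' q.2 ^ 2) := by
    filter_upwards [hgrad] with q ⟨hx, hy⟩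
    rw [hx, hy]
  have hS : 0 < 1 + t ^ 2 + g' p.2 ^ 2 := by positivity
  have hconst : DifferentiableAt ℝ (fun y => t / √(1 + t ^ 2 + g' y ^ 2)) p.2 :=
    (differentiableAt_const t).div
      (((hg'.differentiableAt.pow 2).const_add _).sqrt hS.ne') (sqrt_pos.2 hS).ne'
  have hquot := hg'.div_sqrt_add_sq hk
  rw [meanCurvatureOp, hfst.fderiv_eq, hsnd.fderiv_eq, fderiv_comp_snd_apply hconst,
    fderiv_comp_snd_apply hquot.differentiableAt, hquot.deriv]
  simp

end TiltedCylinder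

theorem ContDiffOn.hasDerivAt_deriv_and_deriv_deriv {f : ℝ → ℝ} {s : Set ℝ} {y : ℝ}
    (hf : ContDiffOn ℝ 2 f s) (hs : IsOpen s) (hy : y ∈ s) :
    HasDerivAt f (deriv f y) y ∧ HasDerivAt (deriv f) (deriv (deriv f) y) y :=
  ⟨(hf.differentiableOn two_ne_zero |>.differentiableAt (hs.mem_nhds hy)).hasDerivAt,
    ((hf.deriv_of_isOpen hs (by norm_num)).differentiableOn one_ne_zero
      |>.differentiableAt (hs.mem_nhds hy)).hasDerivAt⟩

theorem HasDerivAt.const_mul_comp_const_mul {f : ℝ → ℝ} {f' y : ℝ} (C r : ℝ)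
    (hf : HasDerivAt f f' (r * y)) : HasDerivAt (fun y => C * f (r * y)) (C * r * f') y := by
  refine ((hf.comp y ((hasDerivAt_id y).const_mul r)).const_mul C).congr_deriv ?_
  ring

theorem rpow_neg_add_one_mul_rpow {x : ℝ} (hx : 0 < x) (α : ℝ) : x ^ (-(α + 1)) * x ^ α = x⁻¹ := by
  rw [← rpow_add hx, show -(α + 1) + α = -1 by ring, rpow_neg_one]

theorem rpow_three_sub_div_two {x : ℝ} (hx : 0 < x) (α : ℝ) :
    x ^ ((3 - α) / 2) = √x ^ 3 * x ^ (-(α / 2)) := by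
  rw [show (3 - α) / 2 = 1 / 2 * 3 + -(α / 2) by ring, rpow_add hx, rpow_mul hx.le,
    ← sqrt_eq_rpow]
  norm_cast

theorem one_add_tan_sq_add_inv_cos_mul_sq {θ : ℝ} (hθ : 0 < cos θ) (b : ℝ) :
    1 + tan θ ^ 2 + ((cos θ)⁻¹ * b) ^ 2 = (cos θ ^ 2)⁻¹ * (1 + b ^ 2) := by
  have h : (cos θ ^ 2)⁻¹ = 1 + tan θ ^ 2 := by rw [← inv_one_add_tan_sq hθ.ne', inv_inv]
  rw [mul_pow, inv_pow, h]
  ring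

theorem tiltedGrimReaper_identity {θ α b : ℝ} (hθ : 0 < cos θ) :
    (1 + tan θ ^ 2) * ((cos θ)⁻¹ * cos θ ^ α * (1 + b ^ 2) ^ ((3 - α) / 2))
        / √(1 + tan θ ^ 2 + ((cos θ)⁻¹ * b) ^ 2) ^ 3
      = (1 + tan θ ^ 2 + ((cos θ)⁻¹ * b) ^ 2) ^ (-(α / 2)) := by
  have hb : 0 < 1 + b ^ 2 := by positivity
  rw [one_add_tan_sq_add_inv_cos_mul_sq hθ, ← inv_inv (1 + tan θ ^ 2), inv_one_add_tan_sq hθ.ne',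
    rpow_three_sub_div_two hb, mul_rpow (by positivity) hb.le, sqrt_mul (by positivity),
    sqrt_inv, sqrt_sq hθ.le, inv_rpow (by positivity), ← rpow_natCast, ← rpow_mul hθ.le,
    show ((2 : ℕ) : ℝ) * -(α / 2) = -α by push_cast; ring, rpow_neg hθ.le, inv_inv, rpow_natCast]
  have hR : 0 < √(1 + b ^ 2) := sqrt_pos.2 hb
  field_simp

theorem alpha_grim_reaper_solves_soliton_equation_general
    (α : ℝ) (c d : ℝ) (w : ℝ → ℝ)
    (hw : ContDiffOn ℝ 2 w (Set.Ioo c d))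
    (hode : ∀ y ∈ Set.Ioo c d,
      deriv (deriv w) y = (1 + (deriv w y)^2) ^ ((3 - α)/2))
    (θ a : ℝ) (hθ : θ ∈ Set.Ioo (-(π/2)) (π/2)) :
    let wθ : ℝ × ℝ → ℝ := fun p =>
      (Real.cos θ) ^ (-(α + 1)) * w ((Real.cos θ) ^ α * p.2)
        + Real.tan θ * p.1 + a
    let ux : (ℝ × ℝ) → ℝ := fun q => fderiv ℝ wθ q (1, 0)
    let uy : (ℝ × ℝ) → ℝ := fun q => fderiv ℝ wθ q (0, 1)
    ∀ p : ℝ × ℝ, (Real.cos θ) ^ α * p.2 ∈ Set.Ioo c d →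
      fderiv ℝ (fun q => ux q / Real.sqrt (1 + (ux q)^2 + (uy q)^2)) p (1, 0)
        + fderiv ℝ (fun q => uy q / Real.sqrt (1 + (ux q)^2 + (uy q)^2)) p (0, 1)
        = (1 + (ux p)^2 + (uy p)^2) ^ (-(α/2)) := by
  intro wθ ux uy p hp
  have hcos : 0 < cos θ := cos_pos_of_mem_Ioo hθ
  have hnear : ∀ᶠ y in 𝓝 p.2, cos θ ^ α * y ∈ Ioo c d :=
    (continuous_const_mul _).continuousAt.preimage_mem_nhds (isOpen_Ioo.mem_nhds hp)
  have hg : ∀ᶠ y in 𝓝 p.2, HasDerivAt (fun y => cos θ ^ (-(α + 1)) * w (cos θ ^ α * y))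
      ((cos θ)⁻¹ * deriv w (cos θ ^ α * y)) y := by
    filter_upwards [hnear] with y hy
    have hwy := (hw.hasDerivAt_deriv_and_deriv_deriv isOpen_Ioo hy).1.const_mul_comp_const_mul
      (cos θ ^ (-(α + 1))) (cos θ ^ α)
    rwa [rpow_neg_add_one_mul_rpow hcos] at hwy
  have hg' := (hw.hasDerivAt_deriv_and_deriv_deriv isOpen_Ioo hp).2.const_mul_comp_const_mul
    (cos θ)⁻¹ (cos θ ^ α)
  have hux : ux p = tan θ := fderiv_tiltedCylinder_apply_fst hg.self_of_nhds
  have huy : uy p = (cos θ)⁻¹ * deriv w (cos θ ^ α * p.2) :=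
    fderiv_tiltedCylinder_apply_snd hg.self_of_nhds
  change meanCurvatureOp wθ p = _
  rw [meanCurvatureOp_tiltedCylinder hg hg', hux, huy, hode _ hp]
  exact tiltedGrimReaper_identity hcos

theorem alpha_grim_reaper_solves_soliton_equation
    (α : ℝ) (hα : 0 < α) (c d : ℝ) (w : ℝ → ℝ)
    (hw : ContDiffOn ℝ 2 w (Set.Ioo c d))
    (hode : ∀ y ∈ Set.Ioo c d,
      deriv (deriv w) y = (1 + (deriv w y)^2) ^ ((3 - α)/2))
    (θ a : ℝ) (hθ : θ ∈ Set.Ioo (-(π/2)) (π/2)) :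
    let wθ : ℝ × ℝ → ℝ := fun p =>
      (Real.cos θ) ^ (-(α + 1)) * w ((Real.cos θ) ^ α * p.2)
        + Real.tan θ * p.1 + a
    let ux : (ℝ × ℝ) → ℝ := fun q => fderiv ℝ wθ q (1, 0)
    let uy : (ℝ × ℝ) → ℝ := fun q => fderiv ℝ wθ q (0, 1)
    ∀ p : ℝ × ℝ, (Real.cos θ) ^ α * p.2 ∈ Set.Ioo c d →
      fderiv ℝ (fun q => ux q / Real.sqrt (1 + (ux q)^2 + (uy q)^2)) p (1, 0)
        + fderiv ℝ (fun q => uy q / Real.sqrt (1 + (ux q)^2 + (uy q)^2)) p (0, 1)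
        = (1 + (ux p)^2 + (uy p)^2) ^ (-(α/2)) :=
  alpha_grim_reaper_solves_soliton_equation_general α c d w hw hode θ a hθ
end

section
/- Let 0 < α < 1 and let ψ be the maximal solution of ψ'(s) = -(sin ψ(s))^α with initial value ψ(0) = ψ₀ ∈ (0, π/2). Then ψ reaches 0 in finite time: there exists s₀ > 0 with ψ(s) > 0 on [0, s₀) and ψ(s₀) = 0. -/
open Real Set

/-! ψ cannot rise above ψ₀, since ψ' < 0 wherever ψ = ψ₀. While ψ stays in (0, ψ₀] ⊆ (0, π/2],
Jordan's inequality sin x ≥ 2x/π gives ψ' ≤ -(2/π)^α ψ^α, so ψ^(1-α) decreases at rate at least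
(1-α)(2/π)^α > 0 and ψ must vanish by time ψ₀^(1-α) / ((1-α)(2/π)^α); its first zero is the
least point of the (closed) zero set. -/

theorem le_const_of_hasDerivAt_neg_of_eq {f f' : ℝ → ℝ} {a c : ℝ}
    (hf : ∀ s ∈ Ici a, HasDerivAt f (f' s) s) (ha : f a ≤ c)
    (hneg : ∀ s ∈ Ici a, f s = c → f' s < 0) : ∀ s ∈ Ici a, f s ≤ c := fun _ hs =>
  image_le_of_deriv_right_lt_deriv_boundary' (B := fun _ => c) (B' := 0)
    (fun s hs => (hf s hs.1).continuousAt.continuousWithinAt)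
    (fun s hs => (hf s hs.1).hasDerivWithinAt) ha continuousOn_const
    (fun _ _ => hasDerivWithinAt_const _ _ _) (fun s hs => hneg s hs.1) ⟨hs, le_rfl⟩

theorem rpow_one_sub_add_le_of_hasDerivAt_le_neg_mul_rpow {f f' : ℝ → ℝ} {a b α c : ℝ}
    (hab : a ≤ b) (hα : α ≤ 1) (hf : ∀ s ∈ Icc a b, HasDerivAt f (f' s) s)
    (hpos : ∀ s ∈ Icc a b, 0 < f s) (hf' : ∀ s ∈ Icc a b, f' s ≤ -c * f s ^ α) :
    f b ^ (1 - α) + (1 - α) * c * b ≤ f a ^ (1 - α) + (1 - α) * c * a := by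
  set g : ℝ → ℝ := fun s => f s ^ (1 - α) + (1 - α) * c * s
  have hg : ∀ s ∈ Icc a b,
      HasDerivAt g (f' s * (1 - α) * f s ^ (1 - α - 1) + (1 - α) * c) s := fun s hs =>
    ((hf s hs).rpow_const (Or.inl (hpos s hs).ne')).add
      (by simpa using (hasDerivAt_id s).const_mul ((1 - α) * c))
  have hg' : ∀ s ∈ Icc a b, f' s * (1 - α) * f s ^ (1 - α - 1) + (1 - α) * c ≤ 0 := by
    intro s hs
    have hfs := hpos s hs
    have hinv : f s ^ α * f s ^ (-α) = 1 := by
      rw [← rpow_add hfs, add_neg_cancel, rpow_zero]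
    have key : f' s * f s ^ (-α) ≤ -c := by
      calc f' s * f s ^ (-α) ≤ -c * f s ^ α * f s ^ (-α) :=
            mul_le_mul_of_nonneg_right (hf' s hs) (rpow_pos_of_pos hfs _).le
        _ = -c := by rw [mul_assoc, hinv, mul_one]
    rw [sub_sub_cancel_left]
    nlinarith [mul_le_mul_of_nonneg_left key (sub_nonneg.2 hα)]
  have hanti : AntitoneOn g (Icc a b) := by
    refine antitoneOn_of_deriv_nonpos (convex_Icc a b)
      (fun s hs => (hg s hs).continuousAt.continuousWithinAt)
      (fun s hs => (hg s (interior_subset hs)).differentiableAt.differentiableWithinAt)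
      (fun s hs => ?_)
    rw [(hg s (interior_subset hs)).deriv]
    exact hg' s (interior_subset hs)
  exact hanti (left_mem_Icc.2 hab) (right_mem_Icc.2 hab) hab

theorem exists_first_zero_of_continuousOn {f : ℝ → ℝ} {a b : ℝ} (hab : a ≤ b)
    (hf : ContinuousOn f (Icc a b)) (ha : 0 < f a) (hb : f b ≤ 0) :
    ∃ c ∈ Ioc a b, (∀ s ∈ Ico a c, 0 < f s) ∧ f c = 0 := by
  have zero_mem {t : ℝ} (ht : t ∈ Icc a b) (hft : f t ≤ 0) : ∃ s ∈ Icc a t, f s = 0 :=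
    intermediate_value_Icc' ht.1 (hf.mono (Icc_subset_Icc_right ht.2)) ⟨hft, ha.le⟩
  set Z := Icc a b ∩ f ⁻¹' {0}
  have hZne : Z.Nonempty := by
    obtain ⟨s, hs, hfs⟩ := zero_mem (right_mem_Icc.2 hab) hb
    exact ⟨s, hs, hfs⟩
  obtain ⟨c, ⟨⟨hac, hcb⟩, hfc⟩, hc⟩ : ∃ c, IsLeast Z c :=
    ⟨_, (hf.preimage_isClosed_of_isClosed isClosed_Icc isClosed_singleton).isLeast_csInf hZne
      ⟨a, fun s hs => hs.1.1⟩⟩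
  refine ⟨c, ⟨hac.lt_of_ne ?_, hcb⟩, fun s hs => ?_, hfc⟩
  · rintro rfl
    exact ha.ne' hfc
  · by_contra! hfs
    obtain ⟨t, ht, hft⟩ := zero_mem ⟨hs.1, hs.2.le.trans hcb⟩ hfs
    exact (hc ⟨⟨ht.1, ht.2.trans (hs.2.le.trans hcb)⟩, hft⟩).not_gt (ht.2.trans_lt hs.2)

theorem two_div_pi_rpow_mul_rpow_le_sin_rpow {x α : ℝ} (hα : 0 ≤ α) (hx₀ : 0 ≤ x)
    (hx : x ≤ π / 2) : (2 / π) ^ α * x ^ α ≤ sin x ^ α := by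
  rw [← mul_rpow (by positivity) hx₀]
  exact rpow_le_rpow (by positivity) (mul_le_sin hx₀ hx) hα

theorem angle_reaches_zero_in_finite_time
    (α : ℝ) (hα1 : 0 < α) (hα2 : α < 1)
    (ψ₀ : ℝ) (hψ₀ : ψ₀ ∈ Set.Ioo 0 (π/2))
    (ψ : ℝ → ℝ) (h0 : ψ 0 = ψ₀)
    (hode : ∀ s ∈ Set.Ici (0:ℝ), HasDerivAt ψ (-(Real.sin (ψ s)) ^ α) s) :
    ∃ s₀ > (0:ℝ), (∀ s ∈ Set.Ico 0 s₀, 0 < ψ s) ∧ ψ s₀ = 0 := by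
  obtain ⟨hψ₀pos, hψ₀lt⟩ := hψ₀
  have hle : ∀ s ∈ Ici 0, ψ s ≤ ψ₀ :=
    le_const_of_hasDerivAt_neg_of_eq hode h0.le fun _ _ hs => by
      rw [hs, neg_lt_zero]
      exact rpow_pos_of_pos (sin_pos_of_pos_of_lt_pi hψ₀pos (by linarith)) α
  set c := (2 / π) ^ α
  have hc : 0 < (1 - α) * c := mul_pos (by linarith) (by positivity)
  set T := ψ₀ ^ (1 - α) / ((1 - α) * c)
  have hT : 0 ≤ T := by positivity
  obtain ⟨t, ht, hψt⟩ : ∃ t ∈ Icc 0 T, ψ t ≤ 0 := by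
    by_contra! hpos
    have hdecay := rpow_one_sub_add_le_of_hasDerivAt_le_neg_mul_rpow (c := c) hT hα2.le
      (fun s hs => hode s hs.1) hpos fun s hs => by
        rw [neg_mul, neg_le_neg_iff]
        exact two_div_pi_rpow_mul_rpow_le_sin_rpow hα1.le (hpos s hs).le
          ((hle s hs.1).trans hψ₀lt.le)
    rw [h0, mul_zero, add_zero, mul_div_cancel₀ _ hc.ne'] at hdecay
    linarith [rpow_pos_of_pos (hpos T (right_mem_Icc.2 hT)) (1 - α)]
  obtain ⟨s₀, hs₀, hpos, hzero⟩ := exists_first_zero_of_continuousOn ht.1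
    (fun s hs => (hode s hs.1).continuousAt.continuousWithinAt) (h0 ▸ hψ₀pos) hψt
  exact ⟨s₀, hs₀.1, hpos, hzero⟩
end
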